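/- arXiv:1403.7354 — 5 statements merged into one kernel-verified Lean document; each statement's English description precedes it below -/
import Mathlib

section
/- If a random variable X has distribution function F in the Gumbel max-domain of attraction with scaling function w, i.e. P(X > u + x/w(u)) = P(X > u) e^{-x}(1+o(1)) as u → ∞ for all real x, and X_1,...,X_n are i.i.d. copies of X with continuous distribution function, then the r-th order statistic X_{r:n} is also in the Gumbel max-domain of attraction with scaling function w_r(u) = r·w(u), i.e. P(X_{r:n} > u + x/(r w(u))) = P(X_{r:n} > u) e^{-x}(1+o(1)) as u → ∞ for all real x. -/
open MeasureTheory Filter ProbabilityTheory Finset Topology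

/-! With `q(v) = P(X > v)`, independence gives
`P(X_{r:n} > v) = ∑_{k=r}^n C(n,k) q^k (1-q)^(n-k) = q^r h(q)` for a polynomial `h` with
`h(0) = C(n,r) ≠ 0`. Since `q(v) → 0`, the tail ratio of `X_{r:n}` between `u + x/(r w(u))` and
`u` is asymptotically the `r`-th power of the tail ratio of `X` between `u + (x/r)/w(u)` and `u`,
which tends to `(e^{-x/r})^r = e^{-x}`. -/

section IndependentCount

variable {Ω ι β : Type*} [Fintype ι] [DecidableEq ι] {Xs : ι → Ω → β} {s : Set β}
  [DecidablePred (· ∈ s)]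

lemma setOf_filter_mem_eq_iInter (S : Finset ι) :
    {ω | ({i | Xs i ω ∈ s} : Finset ι) = S} = ⋂ i, Xs i ⁻¹' (if i ∈ S then s else sᶜ) := by
  ext ω
  simp only [Set.mem_ofPred_eq, Set.mem_iInter, Set.mem_preimage, Finset.ext_iff, mem_filter,
    mem_univ, true_and]
  refine forall_congr' fun i => ?_
  split_ifs with hi <;> simp [hi]

variable [MeasurableSpace Ω] [MeasurableSpace β] {P : Measure Ω} [IsProbabilityMeasure P]

lemma ProbabilityTheory.iIndepFun.measureReal_filter_mem_eq (hindep : iIndepFun Xs P)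
    (hmeas : ∀ i, Measurable (Xs i)) (hs : MeasurableSet s) {p : ℝ}
    (hp : ∀ i, P.real (Xs i ⁻¹' s) = p) (S : Finset ι) :
    P.real {ω | ({i | Xs i ω ∈ s} : Finset ι) = S} =
      p ^ #S * (1 - p) ^ (Fintype.card ι - #S) := by
  have hfactor (i : ι) :
      P.real (Xs i ⁻¹' (if i ∈ S then s else sᶜ)) = if i ∈ S then p else 1 - p := by
    split_ifs
    · exact hp i
    · rw [Set.preimage_compl, probReal_compl_eq_one_sub (hmeas i hs), hp]
  rw [setOf_filter_mem_eq_iInter, measureReal_def,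
    hindep.meas_iInter fun i => ⟨_, (by split_ifs; exacts [hs, hs.compl]), rfl⟩,
    ENNReal.toReal_prod]
  simp only [← measureReal_def, hfactor]
  rw [prod_ite, prod_const, prod_const, filter_not, filter_mem_eq_inter, univ_inter,
    ← compl_eq_univ_sdiff, card_compl]

lemma ProbabilityTheory.iIndepFun.measureReal_le_card_filter_mem (hindep : iIndepFun Xs P)
    (hmeas : ∀ i, Measurable (Xs i)) (hs : MeasurableSet s) {p : ℝ}
    (hp : ∀ i, P.real (Xs i ⁻¹' s) = p) (r : ℕ) :
    P.real {ω | r ≤ #{i | Xs i ω ∈ s}} = ∑ k ∈ Icc r (Fintype.card ι),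
      (Fintype.card ι).choose k * p ^ k * (1 - p) ^ (Fintype.card ι - k) := by
  have hunion : {ω | r ≤ #{i | Xs i ω ∈ s}} =
      ⋃ S ∈ ({S | r ≤ #S} : Finset (Finset ι)), {ω | ({i | Xs i ω ∈ s} : Finset ι) = S} := by
    ext ω; simp
  rw [hunion, measureReal_biUnion_finset]
  · simp_rw [hindep.measureReal_filter_mem_eq hmeas hs hp, sum_filter]
    rw [← powerset_univ]
    refine (sum_powerset_apply_card
      (f := fun k => if r ≤ k then p ^ k * (1 - p) ^ (Fintype.card ι - k) else 0)).trans ?_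
    rw [card_univ]
    have hIcc : ({m ∈ range (Fintype.card ι + 1) | r ≤ m} : Finset ℕ) = Icc r (Fintype.card ι) := by
      ext; simp; omega
    rw [← hIcc, sum_filter]
    refine sum_congr rfl fun m _ => ?_
    split_ifs <;> simp [mul_assoc]
  · intro S _ T _ hST
    exact Set.disjoint_left.2 fun ω hS hT => hST (hS.symm.trans hT)
  · intro S _
    rw [setOf_filter_mem_eq_iInter]
    exact .iInter fun i => hmeas i (by split_ifs; exacts [hs, hs.compl])

end IndependentCount

noncomputable def binomialTailFactor (n r : ℕ) (t : ℝ) : ℝ :=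
  ∑ k ∈ Icc r n, (n.choose k : ℝ) * t ^ (k - r) * (1 - t) ^ (n - k)

lemma pow_mul_binomialTailFactor (n r : ℕ) (t : ℝ) :
    t ^ r * binomialTailFactor n r t =
      ∑ k ∈ Icc r n, (n.choose k : ℝ) * t ^ k * (1 - t) ^ (n - k) := by
  rw [binomialTailFactor, mul_sum]
  refine sum_congr rfl fun k hk => ?_
  rw [← pow_sub_mul_pow t (mem_Icc.1 hk).1]
  ring

lemma continuous_binomialTailFactor (n r : ℕ) : Continuous (binomialTailFactor n r) := by
  unfold binomialTailFactor
  fun_prop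

lemma binomialTailFactor_zero (n r : ℕ) : binomialTailFactor n r 0 = n.choose r := by
  rw [binomialTailFactor, sum_eq_single r]
  · simp
  · intro k hk hkr
    rw [zero_pow (by have := (mem_Icc.1 hk).1; omega)]
    simp
  · intro hr
    rw [Nat.choose_eq_zero_of_lt (by simpa using hr)]
    simp

lemma tendsto_pow_mul_div_pow_mul {α : Type*} {l : Filter α} {q₀ q₁ : α → ℝ} {h : ℝ → ℝ}
    {c : ℝ} (r : ℕ) (hh : ContinuousAt h 0) (hh0 : h 0 ≠ 0) (hc : c ≠ 0) (hq₀ : Tendsto q₀ l (𝓝 0))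
    (hq₀ne : ∀ᶠ a in l, q₀ a ≠ 0) (hratio : Tendsto (fun a => q₁ a / (q₀ a * c)) l (𝓝 1)) :
    Tendsto (fun a => q₁ a ^ r * h (q₁ a) / (q₀ a ^ r * h (q₀ a) * c ^ r)) l (𝓝 1) := by
  have hq₁ : Tendsto q₁ l (𝓝 0) := by
    have := hratio.mul (hq₀.mul_const c)
    rw [one_mul, zero_mul] at this
    refine this.congr' (hq₀ne.mono fun a ha => ?_)
    exact div_mul_cancel₀ _ (mul_ne_zero ha hc)
  have hquot : Tendsto (fun a => h (q₁ a) / h (q₀ a)) l (𝓝 1) := by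
    have := (hh.tendsto.comp hq₁).div (hh.tendsto.comp hq₀) hh0
    rwa [div_self hh0] at this
  have := (hratio.pow r).mul hquot
  rw [one_pow, one_mul] at this
  refine this.congr fun a => ?_
  rw [div_pow, mul_pow, mul_right_comm _ (h (q₀ a)), mul_div_mul_comm]

lemma tendsto_measure_lt_atTop_zero {Ω : Type*} [MeasurableSpace Ω] (μ : Measure Ω)
    [IsFiniteMeasure μ] {X : Ω → ℝ} (hX : AEMeasurable X μ) :
    Tendsto (fun v => μ {ω | v < X ω}) atTop (𝓝 0) := by
  have hInter : ⋂ v : ℝ, {ω | v < X ω} = ∅ :=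
    Set.iInter_eq_empty_iff.2 fun ω => ⟨X ω, lt_irrefl (X ω)⟩
  simpa [Function.comp_def, hInter] using
    tendsto_measure_iInter_atTop (μ := μ) (s := fun v => {ω | v < X ω})
      (fun v => hX.nullMeasurable measurableSet_Ioi) (fun a b hab ω hω => hab.trans_lt hω)
      ⟨0, measure_ne_top _ _⟩

theorem order_statistic_gumbel_mda_general
    {Ω : Type*} [MeasureSpace Ω] (P : Measure Ω) [IsProbabilityMeasure P]
    (n r : ℕ) (hr : 1 ≤ r) (hrn : r ≤ n)
    (X : Ω → ℝ) (Xs : Fin n → Ω → ℝ)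
    (hmeas : ∀ i, Measurable (Xs i))
    (hindep : iIndepFun Xs P)
    (hident : ∀ i, IdentDistrib (Xs i) X P P)
    (htail : ∀ u : ℝ, 0 < (P {ω | u < X ω}).toReal)
    (w : ℝ → ℝ)
    (hGumbel : ∀ x : ℝ, Tendsto (fun u : ℝ =>
        (P {ω | u + x / w u < X ω}).toReal
          / ((P {ω | u < X ω}).toReal * Real.exp (-x)))
      atTop (nhds 1)) :
    ∀ x : ℝ, Tendsto (fun u : ℝ =>
        (P {ω | r ≤ (Finset.univ.filter fun i : Fin n =>
              u + x / (r * w u) < Xs i ω).card}).toReal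
          / ((P {ω | r ≤ (Finset.univ.filter fun i : Fin n =>
              u < Xs i ω).card}).toReal * Real.exp (-x)))
      atTop (nhds 1) := by
  intro x
  have hq : Tendsto (fun v => (P {ω | v < X ω}).toReal) atTop (𝓝 0) :=
    (ENNReal.tendsto_toReal ENNReal.zero_ne_top).comp
      (tendsto_measure_lt_atTop_zero P (hident ⟨0, by omega⟩).aemeasurable_snd)
  have horder (v : ℝ) : (P {ω | r ≤ #{i | v < Xs i ω}}).toReal =
      (P {ω | v < X ω}).toReal ^ r * binomialTailFactor n r (P {ω | v < X ω}).toReal := by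
    have := hindep.measureReal_le_card_filter_mem hmeas measurableSet_Ioi (s := Set.Ioi v)
      (fun i => congrArg ENNReal.toReal ((hident i).measure_mem_eq measurableSet_Ioi)) r
    rwa [Fintype.card_fin, ← pow_mul_binomialTailFactor] at this
  have hexp : Real.exp (-x) = Real.exp (-(x / r)) ^ r := by
    rw [← Real.exp_nat_mul]
    field_simp
  have hF := tendsto_pow_mul_div_pow_mul r (continuous_binomialTailFactor n r).continuousAt
    (by rw [binomialTailFactor_zero]; exact_mod_cast (Nat.choose_pos hrn).ne')
    (Real.exp_ne_zero _) hq (.of_forall fun u => (htail u).ne') (hGumbel (x / r))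
  refine hF.congr fun u => ?_
  rw [← div_div x, horder, horder, hexp]

/-- If `X` is in the Gumbel max-domain of attraction with scaling function `w`, then the
`r`-th largest order statistic of `n` i.i.d. copies of `X` is in the Gumbel MDA with
scaling function `r * w`. The event `{X_{r:n} > v}` is encoded as "at least `r` of the
`Xs i` exceed `v`". -/
theorem order_statistic_gumbel_mda
    {Ω : Type*} [MeasureSpace Ω] (P : Measure Ω) [IsProbabilityMeasure P]
    (n r : ℕ) (hr : 1 ≤ r) (hrn : r ≤ n)
    (X : Ω → ℝ) (Xs : Fin n → Ω → ℝ)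
    (hmeas : ∀ i, Measurable (Xs i))
    (hindep : iIndepFun Xs P)
    (hident : ∀ i, IdentDistrib (Xs i) X P P)
    (hcont : Continuous fun u : ℝ => (P {ω | X ω ≤ u}).toReal)
    (htail : ∀ u : ℝ, 0 < (P {ω | u < X ω}).toReal)
    (w : ℝ → ℝ) (hw : Measurable w) (hwpos : ∀ u, 0 < w u)
    (hGumbel : ∀ x : ℝ, Tendsto (fun u : ℝ =>
        (P {ω | u + x / w u < X ω}).toReal
          / ((P {ω | u < X ω}).toReal * Real.exp (-x)))
      atTop (nhds 1)) :
    ∀ x : ℝ, Tendsto (fun u : ℝ =>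
        (P {ω | r ≤ (Finset.univ.filter fun i : Fin n =>
              u + x / (r * w u) < Xs i ω).card}).toReal
          / ((P {ω | r ≤ (Finset.univ.filter fun i : Fin n =>
              u < Xs i ω).card}).toReal * Real.exp (-x)))
      atTop (nhds 1) :=
  order_statistic_gumbel_mda_general P n r hr hrn X Xs hmeas hindep hident htail w hGumbel
end

section
/- Let X be a centered stationary Gaussian process with covariance function ρ satisfying ρ(t) < 1 for t > 0, and let X_1,...,X_n be i.i.d. copies with X_{n:n}(t) = min_i X_i(t). Then for all t > 0 and u > 0, P(X_{n:n}(t) > u | X_{n:n}(0) > u) ≤ 2^n (1 - Φ(u √((1-|ρ(t)|)/(1+|ρ(t)|))))^n, where Φ is the standard normal distribution function. -/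
/-!
Each pair `(X_i(0), X_i(t))` is distributed as `(x, ρx + √(1-ρ²)y)` with `x, y` independent
standard Gaussians, and the pairs are independent, so the conditional probability is
`(P(X(0) > u, X(t) > u) / P(X(0) > u))^n`. The reflection
`(x, y) ↦ (ρx + √(1-ρ²)y, √(1-ρ²)x - ρy)` preserves the standard Gaussian measure on `ℝ²`
and exchanges `X(0)` and `X(t)`, so `P(X(0) > u, X(t) > u) ≤ 2 P(X(t) ≥ X(0) > u)`. On the
latter event `y = (X(t) - ρX(0))/√(1-ρ²) > u(1-ρ)/√(1-ρ²) ≥ u√((1-|ρ|)/(1+|ρ|))`, and `y` is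
independent of `X(0) = x`. When `|ρ| ≥ 1` the right-hand side equals `1`.
-/

open MeasureTheory ProbabilityTheory Set
open scoped ENNReal NNReal

lemma charFunDual_gaussianReal (μ : ℝ) (v : ℝ≥0) (L : StrongDual ℝ ℝ) :
    charFunDual (gaussianReal μ v) L =
      Complex.exp (L 1 * μ * Complex.I - v * (L 1) ^ 2 / 2) := by
  have hL : ⇑L = fun x => L 1 * x := by ext x; simpa [mul_comm] using L.map_smul x 1
  rw [charFunDual_eq_charFun_map_one, hL, gaussianReal_map_const_mul, charFun_gaussianReal]
  simp [mul_comm]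

lemma measurePreserving_gaussianReal_prod_reflection {r s : ℝ} (hrs : r ^ 2 + s ^ 2 = 1) :
    MeasurePreserving (fun p : ℝ × ℝ => (r * p.1 + s * p.2, s * p.1 - r * p.2))
      ((gaussianReal 0 1).prod (gaussianReal 0 1))
      ((gaussianReal 0 1).prod (gaussianReal 0 1)) := by
  let T : ℝ × ℝ →L[ℝ] ℝ × ℝ :=
    (r • ContinuousLinearMap.fst ℝ ℝ ℝ + s • ContinuousLinearMap.snd ℝ ℝ ℝ).prod
      (s • ContinuousLinearMap.fst ℝ ℝ ℝ - r • ContinuousLinearMap.snd ℝ ℝ ℝ)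
  change MeasurePreserving T _ _
  refine ⟨T.continuous.measurable, Measure.ext_of_charFunDual (funext fun L => ?_)⟩
  have hL : ∀ x y : ℝ, L (x, y) = x * L (1, 0) + y * L (0, 1) := fun x y => by
    rw [← smul_eq_mul, ← smul_eq_mul, ← L.map_smul, ← L.map_smul, ← L.map_add]; simp
  have hrs' : (r : ℂ) ^ 2 + (s : ℂ) ^ 2 = 1 := by exact_mod_cast hrs
  simp only [charFunDual_map T, charFunDual_prod, charFunDual_gaussianReal,
    ContinuousLinearMap.comp_apply, ContinuousLinearMap.inl_apply, ContinuousLinearMap.inr_apply,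
    ContinuousLinearMap.prod_apply, ContinuousLinearMap.coe_fst', ContinuousLinearMap.coe_snd',
    add_apply, sub_apply, smul_apply, smul_eq_mul, mul_one, mul_zero, add_zero, sub_zero,
    zero_add, zero_sub, hL r s, hL s (-r), Complex.ofReal_add, Complex.ofReal_mul,
    Complex.ofReal_neg, Complex.ofReal_zero, Complex.ofReal_one, NNReal.coe_one, zero_mul,
    one_mul, neg_mul, ← Complex.exp_add, T]
  congr 1
  linear_combination (-(L (1, 0) : ℂ) ^ 2 / 2 - (L (0, 1) : ℂ) ^ 2 / 2) * hrs'

lemma two_mul_gaussianReal_Ioi_zero {v : ℝ≥0} (hv : v ≠ 0) :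
    2 * gaussianReal 0 v (Ioi 0) = 1 := by
  have := nullSingletonClass_gaussianReal (μ := 0) hv
  have hsymm : gaussianReal 0 v (Iic 0) = gaussianReal 0 v (Ioi 0) := by
    conv_lhs => rw [measure_congr (Iio_ae_eq_Iic' (measure_singleton 0)).symm, ← neg_zero,
      ← gaussianReal_map_neg, Measure.map_apply measurable_neg measurableSet_Iio]
    simp
  calc 2 * gaussianReal 0 v (Ioi 0) = gaussianReal 0 v (Iic 0) + gaussianReal 0 v (Ioi 0) := by
        rw [hsymm, two_mul]
    _ = 1 := by rw [← compl_Iic, prob_add_prob_compl measurableSet_Iic]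

/-- For `|r| ≤ 1`, the centred Gaussian law on `ℝ²` with unit variances and correlation `r`. -/
noncomputable def stdGaussianPair (r : ℝ) : Measure (ℝ × ℝ) :=
  ((gaussianReal 0 1).prod (gaussianReal 0 1)).map
    (fun p => (p.1, r * p.1 + Real.sqrt (1 - r ^ 2) * p.2))

lemma stdGaussianPair_map_fst (r : ℝ) :
    (stdGaussianPair r).map Prod.fst = gaussianReal 0 1 := by
  rw [stdGaussianPair, Measure.map_map measurable_fst (by fun_prop)]
  exact Measure.map_fst_prod.trans (by simp)

lemma preimage_lt_lt_subset_prod_union_preimage_prod {r s u : ℝ} (hs : 0 < s)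
    (hrs : r ^ 2 + s ^ 2 = 1) :
    (fun p : ℝ × ℝ => (p.1, r * p.1 + s * p.2)) ⁻¹' ({p | u < p.1} ∩ {p | u < p.2}) ⊆
      Ioi u ×ˢ Ioi (u * (1 - r) / s) ∪
        (fun p : ℝ × ℝ => (r * p.1 + s * p.2, s * p.1 - r * p.2)) ⁻¹'
          (Ioi u ×ˢ Ioi (u * (1 - r) / s)) := by
  rintro ⟨x, y⟩ ⟨hx, hy⟩
  replace hx : u < x := hx
  replace hy : u < r * x + s * y := hy
  have h1r : 0 < 1 - r := by nlinarith
  simp only [mem_union, mem_preimage, mem_prod, mem_Ioi, div_lt_iff₀ hs]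
  rcases le_total x (r * x + s * y) with hle | hge
  · exact Or.inl ⟨hx, by nlinarith [mul_lt_mul_of_pos_left hx h1r]⟩
  · have hswap : (s * x - r * y) * s = x - r * (r * x + s * y) := by linear_combination x * hrs
    exact Or.inr ⟨hy, by nlinarith [mul_lt_mul_of_pos_left hy h1r]⟩

lemma stdGaussianPair_inter_le_of_abs_lt {r : ℝ} (hr : |r| < 1) (u : ℝ) :
    stdGaussianPair r ({p | u < p.1} ∩ {p | u < p.2}) ≤
      2 * gaussianReal 0 1 (Ioi (u * (1 - r) / Real.sqrt (1 - r ^ 2))) *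
        gaussianReal 0 1 (Ioi u) := by
  set s := Real.sqrt (1 - r ^ 2)
  have h1r : 0 < 1 - r ^ 2 := by nlinarith [abs_lt.mp hr, sq_abs r]
  have hrs : r ^ 2 + s ^ 2 = 1 := by rw [Real.sq_sqrt h1r.le]; ring
  set R := Ioi u ×ˢ Ioi (u * (1 - r) / s)
  have hR : MeasurableSet R := measurableSet_Ioi.prod measurableSet_Ioi
  have hrefl := measurePreserving_gaussianReal_prod_reflection hrs
  rw [stdGaussianPair, Measure.map_apply (by fun_prop)
    ((measurableSet_lt measurable_const measurable_fst).inter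
      (measurableSet_lt measurable_const measurable_snd))]
  calc _ ≤ _ := measure_mono
        (preimage_lt_lt_subset_prod_union_preimage_prod (Real.sqrt_pos.2 h1r) hrs)
    _ ≤ _ := measure_union_le _ _
    _ = 2 * ((gaussianReal 0 1).prod (gaussianReal 0 1)) R := by
      rw [hrefl.measure_preimage hR.nullMeasurableSet, two_mul]
    _ = _ := by rw [Measure.prod_prod]; ring

lemma sqrt_one_sub_abs_div_one_add_abs_le {r : ℝ} (hr : |r| < 1) :
    Real.sqrt ((1 - |r|) / (1 + |r|)) ≤ (1 - r) / Real.sqrt (1 - r ^ 2) := by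
  obtain ⟨hr₁, hr₂⟩ := abs_lt.mp hr
  have h1r : 0 < 1 - r ^ 2 := by nlinarith
  rw [Real.sqrt_le_iff, div_pow, Real.sq_sqrt h1r.le, div_le_div_iff₀ (by positivity) h1r]
  refine ⟨by positivity, ?_⟩
  cases abs_cases r <;> nlinarith

lemma stdGaussianPair_inter_le (r : ℝ) {u : ℝ} (hu : 0 ≤ u) :
    stdGaussianPair r ({p | u < p.1} ∩ {p | u < p.2}) ≤
      2 * gaussianReal 0 1 (Ioi (u * Real.sqrt ((1 - |r|) / (1 + |r|)))) *
        stdGaussianPair r {p | u < p.1} := by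
  have hfst : stdGaussianPair r {p | u < p.1} = gaussianReal 0 1 (Ioi u) := by
    rw [← stdGaussianPair_map_fst r, Measure.map_apply measurable_fst measurableSet_Ioi]
    rfl
  rcases lt_or_ge |r| 1 with hr | hr
  · rw [hfst]
    refine (stdGaussianPair_inter_le_of_abs_lt hr u).trans ?_
    gcongr
    rw [mul_div_assoc]
    exact mul_le_mul_of_nonneg_left (sqrt_one_sub_abs_div_one_add_abs_le hr) hu
  · have hsqrt : Real.sqrt ((1 - |r|) / (1 + |r|)) = 0 :=
      Real.sqrt_eq_zero_of_nonpos (div_nonpos_of_nonpos_of_nonneg (by linarith) (by positivity))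
    rw [hsqrt, mul_zero, two_mul_gaussianReal_Ioi_zero one_ne_zero, one_mul]
    exact measure_mono inter_subset_left

section IdentDistrib

variable {Ω α ι : Type*} [MeasurableSpace Ω] [MeasurableSpace α] [Fintype ι]
  {P : Measure Ω} {ν : Measure α} {f : ι → Ω → α}

lemma ProbabilityTheory.iIndepFun.measure_iInter_preimage_eq_pow (hindep : iIndepFun f P)
    (hf : ∀ i, Measurable (f i)) (hlaw : ∀ i, P.map (f i) = ν) {E : Set α}
    (hE : MeasurableSet E) :
    P (⋂ i, f i ⁻¹' E) = ν E ^ Fintype.card ι := by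
  calc P (⋂ i, f i ⁻¹' E) = ∏ i, P (f i ⁻¹' E) :=
        hindep.meas_iInter fun i => ⟨E, hE, rfl⟩
    _ = ∏ _i : ι, ν E :=
      Finset.prod_congr rfl fun i _ => by rw [← hlaw i, Measure.map_apply (hf i) hE]
    _ = ν E ^ Fintype.card ι := by rw [Finset.prod_const, Finset.card_univ]

lemma ProbabilityTheory.iIndepFun.cond_iInter_preimage_le_pow (hindep : iIndepFun f P)
    (hf : ∀ i, Measurable (f i)) (hlaw : ∀ i, P.map (f i) = ν) {E F : Set α}
    (hE : MeasurableSet E) (hF : MeasurableSet F) {k : ℝ≥0∞}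
    (hk : ν (E ∩ F) ≤ k * ν E) :
    P[⋂ i, f i ⁻¹' F | ⋂ i, f i ⁻¹' E] ≤ k ^ Fintype.card ι := by
  have hinter : (⋂ i, f i ⁻¹' E) ∩ ⋂ i, f i ⁻¹' F = ⋂ i, f i ⁻¹' (E ∩ F) := by
    rw [← iInter_inter_distrib]; rfl
  rw [cond_apply (MeasurableSet.iInter fun i => hf i hE), hinter, ← ENNReal.div_eq_inv_mul]
  refine ENNReal.div_le_of_le_mul ?_
  rw [hindep.measure_iInter_preimage_eq_pow hf hlaw hE,
    hindep.measure_iInter_preimage_eq_pow hf hlaw (hE.inter hF), ← mul_pow]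
  exact pow_le_pow_left₀ zero_le hk _

end IdentDistrib

theorem min_order_statistics_cond_prob_gaussian_bound_general
    {Ω : Type*} [MeasureSpace Ω] (P : Measure Ω) [IsProbabilityMeasure P]
    (n : ℕ) (ρ : ℝ → ℝ)
    (Xs : Fin n → ℝ → Ω → ℝ)
    (hmeas : ∀ i t, Measurable (Xs i t))
    (hindep : ∀ t : ℝ,
      iIndepFun (fun i ω => (Xs i 0 ω, Xs i t ω)) P)
    (hpair : ∀ (i : Fin n) (t : ℝ),
      Measure.map (fun ω => (Xs i 0 ω, Xs i t ω)) P
        = Measure.map (fun p : ℝ × ℝ =>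
            (p.1, ρ t * p.1 + Real.sqrt (1 - ρ t ^ 2) * p.2))
          ((gaussianReal 0 1).prod (gaussianReal 0 1))) :
    ∀ t u : ℝ, 0 < t → 0 < u →
      (P[|{ω | ∀ i, u < Xs i 0 ω}] {ω | ∀ i, u < Xs i t ω}).toReal
        ≤ 2 ^ n * (1 - (gaussianReal 0 1
            (Set.Iic (u * Real.sqrt ((1 - |ρ t|) / (1 + |ρ t|))))).toReal) ^ n := by
  intro t u _ hu
  set c := u * Real.sqrt ((1 - |ρ t|) / (1 + |ρ t|))
  have hE : MeasurableSet {p : ℝ × ℝ | u < p.1} :=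
    measurableSet_lt measurable_const measurable_fst
  have hF : MeasurableSet {p : ℝ × ℝ | u < p.2} :=
    measurableSet_lt measurable_const measurable_snd
  have hcond := (hindep t).cond_iInter_preimage_le_pow
    (fun i => (hmeas i 0).prodMk (hmeas i t)) (fun i => hpair i t) hE hF
    (stdGaussianPair_inter_le (ρ t) hu.le)
  have hΦ : (gaussianReal 0 1 (Ioi c)).toReal = 1 - (gaussianReal 0 1 (Iic c)).toReal := by
    rw [← compl_Iic, prob_compl_eq_one_sub measurableSet_Iic,
      ENNReal.toReal_sub_of_le prob_le_one ENNReal.one_ne_top, ENNReal.toReal_one]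
  calc (P[|{ω | ∀ i, u < Xs i 0 ω}] {ω | ∀ i, u < Xs i t ω}).toReal
      ≤ ((2 * gaussianReal 0 1 (Ioi c)) ^ n).toReal := by
        refine ENNReal.toReal_mono (by finiteness) ?_
        simpa [iInter_ofPred] using hcond
    _ = _ := by rw [ENNReal.toReal_pow, ENNReal.toReal_mul, hΦ, mul_pow]; simp

/-- For the minimum `X_{n:n}` of `n` independent copies of a centered stationary
Gaussian process with unit variance and correlation function `ρ` satisfying `ρ(t) < 1`
for `t > 0`, one has
`P(X_{n:n}(t) > u ∣ X_{n:n}(0) > u) ≤ 2^n (1 - Φ(u √((1-|ρ(t)|)/(1+|ρ(t)|))))^n`.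
The bivariate Gaussian structure of `(X_i(0), X_i(t))` is encoded via the pushforward
of a product of two standard Gaussians under `(x,y) ↦ (x, ρ(t) x + √(1-ρ(t)²) y)`. -/
theorem min_order_statistics_cond_prob_gaussian_bound
    {Ω : Type*} [MeasureSpace Ω] (P : Measure Ω) [IsProbabilityMeasure P]
    (n : ℕ) (hn : 1 ≤ n) (ρ : ℝ → ℝ) (hρ : ∀ t : ℝ, 0 < t → ρ t < 1)
    (Xs : Fin n → ℝ → Ω → ℝ)
    (hmeas : ∀ i t, Measurable (Xs i t))
    (hindep : ∀ t : ℝ,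
      iIndepFun (fun i ω => (Xs i 0 ω, Xs i t ω)) P)
    (hpair : ∀ (i : Fin n) (t : ℝ),
      Measure.map (fun ω => (Xs i 0 ω, Xs i t ω)) P
        = Measure.map (fun p : ℝ × ℝ =>
            (p.1, ρ t * p.1 + Real.sqrt (1 - ρ t ^ 2) * p.2))
          ((gaussianReal 0 1).prod (gaussianReal 0 1))) :
    ∀ t u : ℝ, 0 < t → 0 < u →
      (P[|{ω | ∀ i, u < Xs i 0 ω}] {ω | ∀ i, u < Xs i t ω}).toReal
        ≤ 2 ^ n * (1 - (gaussianReal 0 1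
            (Set.Iic (u * Real.sqrt ((1 - |ρ t|) / (1 + |ρ t|))))).toReal) ^ n :=
  min_order_statistics_cond_prob_gaussian_bound_general P n ρ Xs hmeas hindep hpair
end

section
/- Let (Z_i, Z_l) be a bivariate standard Gaussian vector with correlation r ∈ [0,1), and φ(x,y;r) its joint density. Then for all u > 0, P(Z_i ≤ -u, Z_l ≤ -u) ≤ ((1+r)²/u²) φ(u,u;r). -/
open MeasureTheory ProbabilityTheory Real Set

lemma aux_indicator_eq (b c : ℝ) (hb : 0 < b) :
    (fun x => (Set.Iic (b*c)).indicator Real.exp (b*x))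
      = (Set.Iic c).indicator (fun x => Real.exp (b*x)) := by
  funext x
  by_cases hx : x ≤ c
  · have h1 : b*x ≤ b*c := by nlinarith
    simp [Set.indicator_of_mem, hx, h1]
  · have h1 : ¬ b*x ≤ b*c := fun h => hx (le_of_mul_le_mul_left h hb)
    simp [hx, h1]

lemma aux_exp_integrableOn (b c : ℝ) (hb : 0 < b) :
    MeasureTheory.IntegrableOn (fun x => Real.exp (b * x)) (Set.Iic c) := by
  have h := ((integrableOn_exp_Iic (b*c)).integrable_indicator measurableSet_Iic).comp_mul_left' hb.ne'
  rw [aux_indicator_eq b c hb] at h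
  rwa [← integrable_indicator_iff measurableSet_Iic]

lemma aux_exp_integral (b c : ℝ) (hb : 0 < b) :
    ∫ x in Set.Iic c, Real.exp (b * x) = Real.exp (b * c) / b := by
  rw [← integral_indicator measurableSet_Iic, ← aux_indicator_eq b c hb]
  rw [MeasureTheory.Measure.integral_comp_mul_left ((Set.Iic (b*c)).indicator Real.exp) b,
    integral_indicator measurableSet_Iic, integral_exp_Iic]
  rw [abs_of_pos (inv_pos.mpr hb), smul_eq_mul]
  ring

lemma aux_pdf (x : ℝ) : gaussianPDFReal 0 1 x = (Real.sqrt (2*π))⁻¹ * Real.exp (-x^2/2) := by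
  simp [gaussianPDFReal]

lemma aux_gauss_Iic (c κ : ℝ) (hκ : 0 < κ) :
    (gaussianReal 0 1) (Set.Iic c)
      ≤ ENNReal.ofReal ((Real.sqrt (2*π))⁻¹ * (Real.exp (κ^2/2) * (Real.exp (κ*c)/κ))) := by
  rw [gaussianReal_apply_eq_integral 0 one_ne_zero]
  apply ENNReal.ofReal_le_ofReal
  have hmono : ∫ x in Set.Iic c, gaussianPDFReal 0 1 x
      ≤ ∫ x in Set.Iic c, (Real.sqrt (2*π))⁻¹ * (Real.exp (κ^2/2) * Real.exp (κ*x)) := by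
    apply setIntegral_mono_on (integrable_gaussianPDFReal 0 1).integrableOn
      (((aux_exp_integrableOn κ c hκ).const_mul _).const_mul _) measurableSet_Iic
    intro x _
    rw [aux_pdf]
    have h1 : -x^2/2 ≤ κ^2/2 + κ*x := by nlinarith [sq_nonneg (x + κ)]
    have h2 : Real.exp (-x^2/2) ≤ Real.exp (κ^2/2) * Real.exp (κ*x) := by
      rw [← Real.exp_add]; exact Real.exp_le_exp.mpr h1
    have h3 : (0:ℝ) ≤ (Real.sqrt (2*π))⁻¹ := by positivity
    nlinarith [h3]
  refine hmono.trans ?_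
  rw [integral_const_mul, integral_const_mul, aux_exp_integral κ c hκ]

/-- Bivariate Mills-ratio type bound: if `(Z, W)` is a bivariate standard Gaussian
vector with correlation `r ∈ [0,1)`, then for `u > 0`,
`P(Z ≤ -u, W ≤ -u) ≤ ((1+r)²/u²) φ(u,u;r)` where
`φ(u,u;r) = (2π√(1-r²))⁻¹ exp(-u²/(1+r))`. -/
theorem bivariate_gaussian_corner_bound
    {Ω : Type*} [MeasureSpace Ω] (P : Measure Ω) [IsProbabilityMeasure P]
    (r : ℝ) (hr : r ∈ Set.Ico (0:ℝ) 1) (Z W : Ω → ℝ)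
    (hpair : Measure.map (fun ω => (Z ω, W ω)) P
      = Measure.map (fun p : ℝ × ℝ => (p.1, r * p.1 + Real.sqrt (1 - r ^ 2) * p.2))
        ((gaussianReal 0 1).prod (gaussianReal 0 1))) :
    ∀ u : ℝ, 0 < u →
      (P {ω | Z ω ≤ -u ∧ W ω ≤ -u}).toReal
        ≤ (1 + r) ^ 2 / u ^ 2 *
          ((2 * π * Real.sqrt (1 - r ^ 2))⁻¹ * exp (-u ^ 2 / (1 + r))) := by
  intro u hu
  obtain ⟨hr0, hr1⟩ := hr
  have h1r : (0:ℝ) < 1 + r := by linarith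
  have hr2 : (0:ℝ) < 1 - r^2 := by nlinarith
  set s : ℝ := Real.sqrt (1 - r^2) with hs_def
  have hs2 : s^2 = 1 - r^2 := Real.sq_sqrt hr2.le
  have hs : 0 < s := Real.sqrt_pos.mpr hr2
  set μ : Measure ℝ := gaussianReal 0 1 with hμ_def
  set ν : Measure (ℝ × ℝ) := μ.prod μ with hν_def
  set S : Set (ℝ×ℝ) := {p | p.1 ≤ -u ∧ r * p.1 + s * p.2 ≤ -u} with hS_def
  have hSm : MeasurableSet S :=
    (measurableSet_le measurable_fst measurable_const).inter
      (measurableSet_le ((measurable_const.mul measurable_fst).add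
        (measurable_const.mul measurable_snd)) measurable_const)
  -- Step A: transfer to the product space
  have hL : Measurable (fun p : ℝ × ℝ => (p.1, r * p.1 + s * p.2)) := by fun_prop
  have hT : MeasurableSet {p : ℝ × ℝ | p.1 ≤ -u ∧ p.2 ≤ -u} :=
    (measurableSet_le measurable_fst measurable_const).inter
      (measurableSet_le measurable_snd measurable_const)
  have hZW : AEMeasurable (fun ω => (Z ω, W ω)) P := by
    by_contra h
    rw [Measure.map_of_not_aemeasurable h] at hpair
    have h2 : IsProbabilityMeasure (Measure.map (fun p : ℝ × ℝ => (p.1, r * p.1 + s * p.2)) ν) :=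
      Measure.isProbabilityMeasure_map hL.aemeasurable
    rw [← hpair] at h2
    have h3 := h2.measure_univ
    simp only [Measure.coe_zero, Pi.zero_apply] at h3
    exact zero_ne_one h3
  have hPS : P {ω | Z ω ≤ -u ∧ W ω ≤ -u} = ν S := by
    have h1 : {ω | Z ω ≤ -u ∧ W ω ≤ -u}
        = (fun ω => (Z ω, W ω)) ⁻¹' {p : ℝ×ℝ | p.1 ≤ -u ∧ p.2 ≤ -u} := rfl
    rw [h1, ← Measure.map_apply_of_aemeasurable hZW hT, hpair,
      Measure.map_apply hL hT]
    rfl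
  -- constants
  set κ : ℝ := u * s / (1+r) with hκ_def
  have hκ : 0 < κ := by positivity
  set a : ℝ := -(u*r/(1+r)) with ha_def
  set b : ℝ := u/(1+r) with hb_def
  have hb : 0 < b := by positivity
  set E : ℝ := -u^2/(1+r) with hE_def
  set g : ℝ → ℝ := fun x => (Real.sqrt (2*π))⁻¹ * (Real.exp (κ^2/2) * (Real.exp (E + a*x)/κ))
    with hg_def
  -- Step B: inner bound
  have hBx : ∀ x : ℝ, μ (Prod.mk x ⁻¹' S)
      ≤ (Set.Iic (-u)).indicator (fun x => ENNReal.ofReal (g x)) x := by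
    intro x
    by_cases hx : x ≤ -u
    · have hpre : Prod.mk x ⁻¹' S = Set.Iic ((-u - r*x)/s) := by
        ext y
        simp only [hS_def, Set.mem_preimage, Set.mem_setOf_eq, Set.mem_Iic]
        rw [le_div_iff₀ hs]
        constructor
        · rintro ⟨-, h2⟩; nlinarith
        · intro h; exact ⟨hx, by nlinarith⟩
      rw [hpre, Set.indicator_of_mem (Set.mem_Iic.mpr hx)]
      refine (aux_gauss_Iic _ κ hκ).trans_eq ?_
      have harg : κ * ((-u - r*x)/s) = E + a*x := by
        rw [hκ_def, hE_def, ha_def]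
        field_simp
        ring
      rw [harg, hg_def]
    · have hpre : Prod.mk x ⁻¹' S = ∅ := by
        ext y
        simp only [hS_def, Set.mem_preimage, Set.mem_setOf_eq, Set.mem_empty_iff_false,
          iff_false]
        tauto
      simp [hpre]
  have hB : ν S ≤ ∫⁻ x in Set.Iic (-u), ENNReal.ofReal (g x) ∂μ := by
    rw [hν_def, Measure.prod_apply hSm, ← lintegral_indicator measurableSet_Iic]
    exact lintegral_mono hBx
  -- Step C: outer bound
  have hgm : Measurable (fun x => ENNReal.ofReal (g x)) := by fun_prop
  have hC : ∫⁻ x in Set.Iic (-u), ENNReal.ofReal (g x) ∂μ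
      = ∫⁻ x in Set.Iic (-u), ENNReal.ofReal (gaussianPDFReal 0 1 x * g x) ∂volume := by
    rw [hμ_def, gaussianReal_of_var_ne_zero 0 one_ne_zero,
      restrict_withDensity measurableSet_Iic,
      lintegral_withDensity_eq_lintegral_mul _ (measurable_gaussianPDF 0 1) hgm]
    apply lintegral_congr
    intro x
    simp only [Pi.mul_apply, gaussianPDF]
    rw [← ENNReal.ofReal_mul (gaussianPDFReal_nonneg 0 1 x)]
  set K : ℝ := (Real.sqrt (2*π))⁻¹ * (Real.sqrt (2*π))⁻¹ * (Real.exp (κ^2/2)/κ)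
      * Real.exp (u^2/2 + E) with hK_def
  have hpoint : ∀ x : ℝ, gaussianPDFReal 0 1 x * g x ≤ K * Real.exp (b*x) := by
    intro x
    rw [aux_pdf, hg_def]
    have hba : b = u + a := by rw [hb_def, ha_def]; field_simp; ring
    have h1 : (Real.sqrt (2*π))⁻¹ * Real.exp (-x^2/2)
        * ((Real.sqrt (2*π))⁻¹ * (Real.exp (κ^2/2) * (Real.exp (E + a*x)/κ)))
        = ((Real.sqrt (2*π))⁻¹ * (Real.sqrt (2*π))⁻¹ * (Real.exp (κ^2/2)/κ))
          * Real.exp (-x^2/2 + (E + a*x)) := by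
      simp only [Real.exp_add]; ring
    rw [h1]
    have h2 : -x^2/2 + (E + a*x) ≤ (u^2/2 + E) + b*x := by
      have h3 : (u^2/2 + E) + b*x - (-x^2/2 + (E + a*x)) = (x+u)^2/2 := by
        rw [hba]; ring
      nlinarith [sq_nonneg (x+u)]
    calc ((Real.sqrt (2*π))⁻¹ * (Real.sqrt (2*π))⁻¹ * (Real.exp (κ^2/2)/κ))
          * Real.exp (-x^2/2 + (E + a*x))
        ≤ ((Real.sqrt (2*π))⁻¹ * (Real.sqrt (2*π))⁻¹ * (Real.exp (κ^2/2)/κ))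
          * Real.exp ((u^2/2 + E) + b*x) := by
          apply mul_le_mul_of_nonneg_left (Real.exp_le_exp.mpr h2) (by positivity)
      _ = K * Real.exp (b*x) := by rw [hK_def]; simp only [Real.exp_add]; ring
  have hC2 : ∫⁻ x in Set.Iic (-u), ENNReal.ofReal (gaussianPDFReal 0 1 x * g x) ∂volume
      ≤ ENNReal.ofReal (K * (Real.exp (b*(-u))/b)) := by
    calc ∫⁻ x in Set.Iic (-u), ENNReal.ofReal (gaussianPDFReal 0 1 x * g x) ∂volume
        ≤ ∫⁻ x in Set.Iic (-u), ENNReal.ofReal (K * Real.exp (b*x)) ∂volume :=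
          lintegral_mono fun x => ENNReal.ofReal_le_ofReal (hpoint x)
      _ = ENNReal.ofReal (∫ x in Set.Iic (-u), K * Real.exp (b*x)) :=
          (ofReal_integral_eq_lintegral_ofReal
            ((aux_exp_integrableOn b (-u) hb).const_mul K)
            (ae_of_all _ fun x => by positivity)).symm
      _ = ENNReal.ofReal (K * (Real.exp (b*(-u))/b)) := by
          rw [integral_const_mul, aux_exp_integral b (-u) hb]
  -- final arithmetic
  have h2π : Real.sqrt (2*π) * Real.sqrt (2*π) = 2*π := Real.mul_self_sqrt (by positivity)
  have hfinal : K * (Real.exp (b*(-u))/b)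
      = (1 + r)^2/u^2 * ((2*π*s)⁻¹ * Real.exp (-u^2/(1+r))) := by
    have hexps : κ^2/2 + (u^2/2 + E) + b*(-u) = -u^2/(1+r) := by
      have hκ2 : κ^2 = u^2*(1-r^2)/(1+r)^2 := by
        rw [hκ_def, div_pow, mul_pow, hs2]
      rw [hκ2, hE_def, hb_def]
      field_simp
      ring
    have h4 : K * (Real.exp (b*(-u))/b)
        = ((Real.sqrt (2*π))⁻¹ * (Real.sqrt (2*π))⁻¹ / (κ*b))
          * Real.exp (κ^2/2 + (u^2/2 + E) + b*(-u)) := by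
      rw [hK_def]; simp only [Real.exp_add]; ring
    rw [h4, hexps]
    have hcoef : (Real.sqrt (2*π))⁻¹ * (Real.sqrt (2*π))⁻¹ / (κ*b)
        = (1 + r)^2/u^2 * (2*π*s)⁻¹ := by
      have hsq : (Real.sqrt (2*π))⁻¹ * (Real.sqrt (2*π))⁻¹ = (2*π)⁻¹ := by
        rw [← mul_inv, h2π]
      have hπ : (2:ℝ)*π ≠ 0 := by positivity
      rw [hκ_def, hb_def, hsq]
      field_simp
    rw [hcoef]
    ring
  -- conclusion
  rw [hPS]
  refine ENNReal.toReal_le_of_le_ofReal (by positivity) ?_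
  rw [← hfinal]
  exact hB.trans (hC ▸ hC2)
end

section
/- Let ζ(t) = δ|𝐗(t)| + √(1-δ²) X_{m+1}(t) with 𝐗(t) = (X_1(t),...,X_m(t)) for independent copies X_i of a centered stationary Gaussian process with covariance ρ, and δ ∈ (0,1]. Define ζ*(qt) = δ|𝐗(qt) - ρ(qt)𝐗(0)| + √(1-δ²)(X_{m+1}(qt) - ρ(qt)X_{m+1}(0)). Then ζ*(qt) is independent of ζ(0), ζ*(qt) has the same distribution as √(1-ρ(qt)²)·ζ(0), and on the event {ζ(qt) > ζ(0) > u} one has ζ*(qt) > u(1 - ρ(qt)). -/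
/-!
Put `R_i = X_i(qt) - ρ(qt) X_i(0)`. Since `(X_i(0), X_i(qt))` is distributed as
`(G, ρG + √(1-ρ²) G')` with `G, G'` independent, `(X_i(0), R_i)` is distributed as
`(G, √(1-ρ²) G')`; together with independence over `i`, the vectors `X(0)` and `R` are
independent with laws `μ^{m+1}` and `(√(1-ρ²)·)_* μ^{m+1}`, where `μ = N(0,1)`.
Both `ζ(0)` and `ζ*(qt)` are the same positively homogeneous functional `skewZeta`
of `X(0)` and of `R`, which gives independence and the law.
The bound comes from the reverse triangle inequality:
`ζ*(qt) ≥ ζ(qt) - ρ ζ(0) > (1 - ρ) ζ(0) > (1 - ρ) u`.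
-/

open MeasureTheory ProbabilityTheory

noncomputable def skewZeta (m : ℕ) (δ : ℝ) (y : Fin (m + 1) → ℝ) : ℝ :=
  δ * Real.sqrt (∑ i : Fin m, (y i.castSucc) ^ 2) + Real.sqrt (1 - δ ^ 2) * y (Fin.last m)

lemma measurable_skewZeta (m : ℕ) (δ : ℝ) : Measurable (skewZeta m δ) := by
  unfold skewZeta
  fun_prop

lemma skewZeta_const_mul (m : ℕ) (δ : ℝ) {s : ℝ} (hs : 0 ≤ s) (y : Fin (m + 1) → ℝ) :
    skewZeta m δ (fun i => s * y i) = s * skewZeta m δ y := by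
  simp only [skewZeta, mul_pow, ← Finset.mul_sum, Real.sqrt_mul (sq_nonneg s),
    Real.sqrt_sq hs]
  ring

lemma sqrt_sum_sq_eq_norm {ι : Type*} [Fintype ι] (v : ι → ℝ) :
    Real.sqrt (∑ i, v i ^ 2) = ‖WithLp.toLp 2 v‖ := by
  simp [EuclideanSpace.norm_eq]

lemma sub_mul_sqrt_sum_sq_le {ι : Type*} [Fintype ι] {c : ℝ} (hc : 0 ≤ c) (x y : ι → ℝ) :
    Real.sqrt (∑ i, y i ^ 2) - c * Real.sqrt (∑ i, x i ^ 2)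
      ≤ Real.sqrt (∑ i, (y i - c * x i) ^ 2) := by
  have h := norm_sub_norm_le (WithLp.toLp 2 y) (c • WithLp.toLp 2 x)
  rw [norm_smul, Real.norm_of_nonneg hc] at h
  simp only [sqrt_sum_sq_eq_norm]
  exact h

lemma sub_mul_skewZeta_le (m : ℕ) {δ c : ℝ} (hδ : 0 ≤ δ) (hc : 0 ≤ c) (x y : Fin (m + 1) → ℝ) :
    skewZeta m δ y - c * skewZeta m δ x ≤ skewZeta m δ (fun i => y i - c * x i) := by
  have h := mul_le_mul_of_nonneg_left
    (sub_mul_sqrt_sum_sq_le hc (fun i : Fin m => x i.castSucc) (fun i => y i.castSucc)) hδ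
  simp only [skewZeta]
  linarith

lemma mul_one_sub_lt_skewZeta_sub (m : ℕ) {δ c u : ℝ} (hδ : 0 ≤ δ) (hc₀ : 0 ≤ c) (hc₁ : c < 1)
    {x y : Fin (m + 1) → ℝ} (hu : u < skewZeta m δ x) (hxy : skewZeta m δ x < skewZeta m δ y) :
    u * (1 - c) < skewZeta m δ (fun i => y i - c * x i) :=
  calc u * (1 - c) < skewZeta m δ x * (1 - c) := by gcongr
    _ = skewZeta m δ x - c * skewZeta m δ x := by ring
    _ ≤ skewZeta m δ y - c * skewZeta m δ x := by linarith
    _ ≤ skewZeta m δ (fun i => y i - c * x i) := sub_mul_skewZeta_le m hδ hc₀ x y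

lemma map_skewZeta_pi_map_const_mul (m : ℕ) (δ : ℝ) {s : ℝ} (hs : 0 ≤ s) (μ : Measure ℝ)
    [IsProbabilityMeasure μ] :
    (Measure.pi fun _ : Fin (m + 1) => μ.map (s * ·)).map (skewZeta m δ)
      = (Measure.pi fun _ : Fin (m + 1) => μ).map (fun y => s * skewZeta m δ y) := by
  have : IsProbabilityMeasure (μ.map (s * ·)) :=
    Measure.isProbabilityMeasure_map (measurable_const_mul s).aemeasurable
  rw [← (measurePreserving_pi (fun _ => μ) (fun _ => μ.map (s * ·))
      fun _ => ⟨measurable_const_mul s, rfl⟩).map_eq,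
    Measure.map_map (measurable_skewZeta m δ) (by fun_prop)]
  congr 1
  funext y
  exact skewZeta_const_mul m δ hs y

section Laws

variable {Ω : Type*} [MeasurableSpace Ω] {P : Measure Ω}

lemma map_prod_sub_mul_fst_eq {X Y : Ω → ℝ} (hX : Measurable X) (hY : Measurable Y)
    {μ ν : Measure ℝ} [SFinite μ] [SFinite ν] {c s : ℝ}
    (h : P.map (fun ω => (X ω, Y ω)) = (μ.prod ν).map (fun p => (p.1, c * p.1 + s * p.2))) :
    P.map (fun ω => (X ω, Y ω - c * X ω)) = μ.prod (ν.map (s * ·)) := by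
  have hψ : Measurable fun p : ℝ × ℝ => (p.1, p.2 - c * p.1) := by fun_prop
  have hφ : Measurable fun p : ℝ × ℝ => (p.1, c * p.1 + s * p.2) := by fun_prop
  have hcomp : (fun p : ℝ × ℝ => (p.1, p.2 - c * p.1)) ∘ (fun p => (p.1, c * p.1 + s * p.2))
      = Prod.map id (s * ·) := by
    funext p
    simp [Prod.map]
  rw [show (fun ω => (X ω, Y ω - c * X ω))
      = (fun p : ℝ × ℝ => (p.1, p.2 - c * p.1)) ∘ fun ω => (X ω, Y ω) from rfl,
    ← Measure.map_map hψ (hX.prodMk hY), h, Measure.map_map hψ hφ,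
    hcomp, ← Measure.map_prod_map _ _ measurable_id (measurable_const_mul s), Measure.map_id]

lemma map_pi_prod_eq_prod_pi {ι α β : Type*} [Fintype ι] [MeasurableSpace α] [MeasurableSpace β]
    {Z : ι → Ω → α} {W : ι → Ω → β} (hZ : ∀ i, Measurable (Z i)) (hW : ∀ i, Measurable (W i))
    (hindep : iIndepFun (fun i ω => (Z i ω, W i ω)) P)
    {μ : Measure α} {ν : Measure β} [SigmaFinite μ] [SigmaFinite ν]
    (hlaw : ∀ i, P.map (fun ω => (Z i ω, W i ω)) = μ.prod ν) :
    P.map (fun ω => ((fun i => Z i ω), (fun i => W i ω)))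
      = (Measure.pi fun _ : ι => μ).prod (Measure.pi fun _ : ι => ν) := by
  have hjoint := hindep.map_fun_eq_pi_map fun i => ((hZ i).prodMk (hW i)).aemeasurable
  simp only [hlaw] at hjoint
  have hcomp : (fun ω => ((fun i => Z i ω), (fun i => W i ω)))
      = MeasurableEquiv.arrowProdEquivProdArrow α β ι ∘ fun ω i => (Z i ω, W i ω) := rfl
  rw [hcomp, ← Measure.map_map (MeasurableEquiv.measurable _)
      (measurable_pi_lambda _ fun i => (hZ i).prodMk (hW i)), hjoint,
    (measurePreserving_arrowProdEquivProdArrow α β ι (fun _ => μ) (fun _ => ν)).map_eq]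

lemma indepFun_of_map_prod_eq_prod {α β : Type*} [MeasurableSpace α] [MeasurableSpace β]
    [IsProbabilityMeasure P] {f : Ω → α} {g : Ω → β} (hf : Measurable f) (hg : Measurable g)
    {μ : Measure α} {ν : Measure β} [IsProbabilityMeasure μ] [IsProbabilityMeasure ν]
    (h : P.map (fun ω => (f ω, g ω)) = μ.prod ν) :
    IndepFun f g P ∧ P.map f = μ ∧ P.map g = ν := by
  have hf' : P.map f = μ := by
    rw [show f = Prod.fst ∘ fun ω => (f ω, g ω) from rfl,
      ← Measure.map_map measurable_fst (hf.prodMk hg), h, Measure.map_fst_prod, measure_univ,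
      one_smul]
  have hg' : P.map g = ν := by
    rw [show g = Prod.snd ∘ fun ω => (f ω, g ω) from rfl,
      ← Measure.map_map measurable_snd (hf.prodMk hg), h, Measure.map_snd_prod, measure_univ,
      one_smul]
  refine ⟨?_, hf', hg'⟩
  rw [indepFun_iff_map_prod_eq_prod_map_map hf.aemeasurable hg.aemeasurable, hf', hg', h]

end Laws

theorem skew_gaussian_zeta_star_properties_general
    {Ω : Type*} [MeasureSpace Ω] (P : Measure Ω) [IsProbabilityMeasure P]
    (m : ℕ) (δ : ℝ) (hδ : δ ∈ Set.Ioc (0:ℝ) 1)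
    (c : ℝ) (hc : c ∈ Set.Ico (0:ℝ) 1)
    (X0 X1 : Fin (m + 1) → Ω → ℝ)
    (hmeas0 : ∀ i, Measurable (X0 i)) (hmeas1 : ∀ i, Measurable (X1 i))
    (hindep : iIndepFun (fun i ω => (X0 i ω, X1 i ω)) P)
    (hpair : ∀ i, Measure.map (fun ω => (X0 i ω, X1 i ω)) P
      = Measure.map (fun p : ℝ × ℝ => (p.1, c * p.1 + Real.sqrt (1 - c ^ 2) * p.2))
        ((gaussianReal 0 1).prod (gaussianReal 0 1))) :
    -- ζ*(qt) is independent of ζ(0)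
    IndepFun
      (fun ω => δ * Real.sqrt (∑ i : Fin m, (X1 i.castSucc ω - c * X0 i.castSucc ω) ^ 2)
        + Real.sqrt (1 - δ ^ 2) * (X1 (Fin.last m) ω - c * X0 (Fin.last m) ω))
      (fun ω => δ * Real.sqrt (∑ i : Fin m, (X0 i.castSucc ω) ^ 2)
        + Real.sqrt (1 - δ ^ 2) * X0 (Fin.last m) ω) P ∧
    -- ζ*(qt) has the same law as √(1-c²) ζ(0)
    Measure.map
      (fun ω => δ * Real.sqrt (∑ i : Fin m, (X1 i.castSucc ω - c * X0 i.castSucc ω) ^ 2)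
        + Real.sqrt (1 - δ ^ 2) * (X1 (Fin.last m) ω - c * X0 (Fin.last m) ω)) P
      = Measure.map
          (fun ω => Real.sqrt (1 - c ^ 2) *
            (δ * Real.sqrt (∑ i : Fin m, (X0 i.castSucc ω) ^ 2)
              + Real.sqrt (1 - δ ^ 2) * X0 (Fin.last m) ω)) P ∧
    -- on the event {ζ(qt) > ζ(0) > u}, ζ*(qt) > u(1-c)
    ∀ (u : ℝ) (ω : Ω),
      u < δ * Real.sqrt (∑ i : Fin m, (X0 i.castSucc ω) ^ 2)
          + Real.sqrt (1 - δ ^ 2) * X0 (Fin.last m) ω →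
      δ * Real.sqrt (∑ i : Fin m, (X0 i.castSucc ω) ^ 2)
          + Real.sqrt (1 - δ ^ 2) * X0 (Fin.last m) ω
        < δ * Real.sqrt (∑ i : Fin m, (X1 i.castSucc ω) ^ 2)
          + Real.sqrt (1 - δ ^ 2) * X1 (Fin.last m) ω →
      u * (1 - c)
        < δ * Real.sqrt (∑ i : Fin m, (X1 i.castSucc ω - c * X0 i.castSucc ω) ^ 2)
          + Real.sqrt (1 - δ ^ 2) * (X1 (Fin.last m) ω - c * X0 (Fin.last m) ω) := by
  obtain ⟨hδ₀, -⟩ := hδ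
  obtain ⟨hc₀, hc₁⟩ := hc
  set s := Real.sqrt (1 - c ^ 2)
  set μ := gaussianReal 0 1
  have : IsProbabilityMeasure (μ.map (s * ·)) :=
    Measure.isProbabilityMeasure_map (measurable_const_mul s).aemeasurable
  have hres : ∀ i, Measurable fun ω => X1 i ω - c * X0 i ω := fun i => by fun_prop
  obtain ⟨hindepZR, hlawZ, hlawR⟩ := indepFun_of_map_prod_eq_prod
    (measurable_pi_lambda _ hmeas0) (measurable_pi_lambda _ hres)
    (map_pi_prod_eq_prod_pi hmeas0 hres
      (hindep.comp _ fun _ => (by fun_prop : Measurable fun p : ℝ × ℝ => (p.1, p.2 - c * p.1)))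
      fun i => map_prod_sub_mul_fst_eq (hmeas0 i) (hmeas1 i) (hpair i))
  refine ⟨?_, ?_, ?_⟩
  · exact hindepZR.symm.comp (measurable_skewZeta m δ) (measurable_skewZeta m δ)
  · calc P.map (fun ω => skewZeta m δ fun i => X1 i ω - c * X0 i ω)
        = (Measure.pi fun _ => μ.map (s * ·)).map (skewZeta m δ) := by
          rw [← hlawR, Measure.map_map (measurable_skewZeta m δ) (measurable_pi_lambda _ hres)]
          rfl
      _ = (Measure.pi fun _ => μ).map (fun y => s * skewZeta m δ y) :=
          map_skewZeta_pi_map_const_mul m δ (Real.sqrt_nonneg _) μ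
      _ = P.map (fun ω => s * skewZeta m δ fun i => X0 i ω) := by
          rw [← hlawZ, Measure.map_map ((measurable_skewZeta m δ).const_mul s)
            (measurable_pi_lambda _ hmeas0)]
          rfl
  · exact fun u ω => mul_one_sub_lt_skewZeta_sub m hδ₀.le hc₀ hc₁
      (x := fun i => X0 i ω) (y := fun i => X1 i ω)

/-- Properties of `ζ*(qt) = δ|𝐗(qt) - ρ(qt)𝐗(0)| + √(1-δ²)(X_{m+1}(qt) - ρ(qt)X_{m+1}(0))`
for the skew-Gaussian process `ζ(t) = δ|𝐗(t)| + √(1-δ²)X_{m+1}(t)`:  `ζ*(qt)` is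
independent of `ζ(0)`, has the same law as `√(1-ρ(qt)²) ζ(0)`, and on the event
`{ζ(qt) > ζ(0) > u}` one has `ζ*(qt) > u(1-ρ(qt))`.  Here `X0 i` and `X1 i` denote
`X_i(0)` and `X_i(qt)` and `c = ρ(qt) ∈ [0,1)`. -/
theorem skew_gaussian_zeta_star_properties
    {Ω : Type*} [MeasureSpace Ω] (P : Measure Ω) [IsProbabilityMeasure P]
    (m : ℕ) (hm : 1 ≤ m) (δ : ℝ) (hδ : δ ∈ Set.Ioc (0:ℝ) 1)
    (c : ℝ) (hc : c ∈ Set.Ico (0:ℝ) 1)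
    (X0 X1 : Fin (m + 1) → Ω → ℝ)
    (hmeas0 : ∀ i, Measurable (X0 i)) (hmeas1 : ∀ i, Measurable (X1 i))
    (hindep : iIndepFun (fun i ω => (X0 i ω, X1 i ω)) P)
    (hpair : ∀ i, Measure.map (fun ω => (X0 i ω, X1 i ω)) P
      = Measure.map (fun p : ℝ × ℝ => (p.1, c * p.1 + Real.sqrt (1 - c ^ 2) * p.2))
        ((gaussianReal 0 1).prod (gaussianReal 0 1))) :
    -- ζ*(qt) is independent of ζ(0)
    IndepFun
      (fun ω => δ * Real.sqrt (∑ i : Fin m, (X1 i.castSucc ω - c * X0 i.castSucc ω) ^ 2)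
        + Real.sqrt (1 - δ ^ 2) * (X1 (Fin.last m) ω - c * X0 (Fin.last m) ω))
      (fun ω => δ * Real.sqrt (∑ i : Fin m, (X0 i.castSucc ω) ^ 2)
        + Real.sqrt (1 - δ ^ 2) * X0 (Fin.last m) ω) P ∧
    -- ζ*(qt) has the same law as √(1-c²) ζ(0)
    Measure.map
      (fun ω => δ * Real.sqrt (∑ i : Fin m, (X1 i.castSucc ω - c * X0 i.castSucc ω) ^ 2)
        + Real.sqrt (1 - δ ^ 2) * (X1 (Fin.last m) ω - c * X0 (Fin.last m) ω)) P
      = Measure.map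
          (fun ω => Real.sqrt (1 - c ^ 2) *
            (δ * Real.sqrt (∑ i : Fin m, (X0 i.castSucc ω) ^ 2)
              + Real.sqrt (1 - δ ^ 2) * X0 (Fin.last m) ω)) P ∧
    -- on the event {ζ(qt) > ζ(0) > u}, ζ*(qt) > u(1-c)
    ∀ (u : ℝ) (ω : Ω),
      u < δ * Real.sqrt (∑ i : Fin m, (X0 i.castSucc ω) ^ 2)
          + Real.sqrt (1 - δ ^ 2) * X0 (Fin.last m) ω →
      δ * Real.sqrt (∑ i : Fin m, (X0 i.castSucc ω) ^ 2)
          + Real.sqrt (1 - δ ^ 2) * X0 (Fin.last m) ω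
        < δ * Real.sqrt (∑ i : Fin m, (X1 i.castSucc ω) ^ 2)
          + Real.sqrt (1 - δ ^ 2) * X1 (Fin.last m) ω →
      u * (1 - c)
        < δ * Real.sqrt (∑ i : Fin m, (X1 i.castSucc ω - c * X0 i.castSucc ω) ^ 2)
          + Real.sqrt (1 - δ ^ 2) * (X1 (Fin.last m) ω - c * X0 (Fin.last m) ω) :=
  skew_gaussian_zeta_star_properties_general P m δ hδ c hc X0 X1 hmeas0 hmeas1 hindep hpair
end

section
/- Suppose T = T(u) satisfies ln T = n u²/2 + (n - 2/α) ln u + C for a constant C, with n ≥ 1, α ∈ (0,2]. Then as T → ∞, u² = (2/n) ln T + ((2/(nα)) - 1) ln ln T + C' (1 + o(1)) for an explicit constant C' = ln((n/2)^{1 - 2/(nα)} e^{-2C/n}). -/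
/-!
Solving `log T = n u²/2 + b log u + C` for `u²` gives `u² = (2/n) log T - (2b/n) log u - 2C/n`,
so it remains to express `log u` through `log T`. Since `b log u + C = o(u²)`, `log T ~ (n/2) u²`,
hence `log log T = log (n/2) + 2 log u + o(1)`, and substituting `2 log u` eliminates `log u`.
-/

open Real Filter Topology

lemma tendsto_mul_log_add_const_div_sq_atTop (b C : ℝ) :
    Tendsto (fun u : ℝ => (b * log u + C) / u ^ 2) atTop (𝓝 0) := by
  have hlog : Tendsto (fun u : ℝ => log u / u ^ 2) atTop (𝓝 0) := by
    simpa only [rpow_two] using (isLittleO_log_rpow_atTop two_pos).tendsto_div_nhds_zero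
  have hconst : Tendsto (fun u : ℝ => C / u ^ 2) atTop (𝓝 0) :=
    tendsto_const_nhds.div_atTop (tendsto_pow_atTop two_ne_zero)
  simpa [add_div, mul_div_assoc] using (hlog.const_mul b).add hconst

lemma tendsto_log_sub_log_of_div_tendsto_one {l : Filter ℝ} {f g : ℝ → ℝ}
    (hf : ∀ᶠ x in l, 0 < f x) (hg : ∀ᶠ x in l, 0 < g x)
    (hfg : Tendsto (fun x => f x / g x) l (𝓝 1)) :
    Tendsto (fun x => log (f x) - log (g x)) l (𝓝 0) := by
  have hlog : Tendsto (fun x => log (f x / g x)) l (𝓝 0) := by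
    simpa [Function.comp_def] using (continuousAt_log one_ne_zero).tendsto.comp hfg
  refine hlog.congr' ?_
  filter_upwards [hf, hg] with x hfx hgx
  exact log_div hfx.ne' hgx.ne'

theorem tendsto_sq_sub_log_add_log_log_of_log_eq {n b C : ℝ} (hn : 0 < n) {T : ℝ → ℝ}
    (hT : ∀ᶠ u in atTop, log (T u) = n * u ^ 2 / 2 + b * log u + C) :
    Tendsto (fun u => u ^ 2 - (2 / n) * log (T u) + (b / n) * log (log (T u))) atTop
      (𝓝 ((b / n) * log (n / 2) - 2 * C / n)) := by
  have hratio : Tendsto (fun u => log (T u) / (n / 2 * u ^ 2)) atTop (𝓝 1) := by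
    have hlim := ((tendsto_mul_log_add_const_div_sq_atTop b C).const_mul (2 / n)).const_add 1
    rw [mul_zero, add_zero] at hlim
    refine hlim.congr' ?_
    filter_upwards [hT, eventually_gt_atTop 0] with u hTu hu
    rw [hTu]
    field_simp
    ring
  have hsq_pos : ∀ᶠ u in atTop, 0 < n / 2 * u ^ 2 := by
    filter_upwards [eventually_gt_atTop 0] with u hu
    positivity
  have hlogT_pos : ∀ᶠ u in atTop, 0 < log (T u) := by
    filter_upwards [hratio.eventually (eventually_gt_nhds one_pos), hsq_pos] with u hu hsq
    exact (div_pos_iff_of_pos_right hsq).mp hu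
  have herr := (tendsto_log_sub_log_of_div_tendsto_one hlogT_pos hsq_pos hratio).const_mul (b / n)
  rw [mul_zero] at herr
  have hlim := herr.const_add ((b / n) * log (n / 2) - 2 * C / n)
  rw [add_zero] at hlim
  refine hlim.congr' ?_
  filter_upwards [hT, eventually_gt_atTop 0] with u hTu hu
  rw [log_mul (by positivity) (by positivity), log_pow, hTu]
  field_simp
  push_cast
  ring

theorem u_sq_asymptotic_general (n : ℕ) (hn : 1 ≤ n) (α : ℝ)
    (C : ℝ) (T : ℝ → ℝ)
    (hT : ∀ u : ℝ, 1 ≤ u →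
      log (T u) = n * u ^ 2 / 2 + ((n : ℝ) - 2 / α) * log u + C) :
    Tendsto (fun u : ℝ =>
        u ^ 2 - ((2 / (n : ℝ)) * log (T u)
          + (2 / ((n : ℝ) * α) - 1) * log (log (T u))))
      atTop
      (nhds (log (((n : ℝ) / 2) ^ ((1:ℝ) - 2 / ((n : ℝ) * α)) * exp (-2 * C / n)))) := by
  have hn_pos : (0 : ℝ) < n := by exact_mod_cast hn
  have hcoef : ((n : ℝ) - 2 / α) / n = 1 - 2 / (n * α) := by
    field_simp
  have hlim := tendsto_sq_sub_log_add_log_log_of_log_eq hn_pos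
    ((eventually_ge_atTop 1).mono hT)
  rw [hcoef] at hlim
  rw [log_mul (rpow_pos_of_pos (by positivity) _).ne' (exp_ne_zero _), log_rpow (by positivity),
    log_exp, neg_mul, neg_div, ← sub_eq_add_neg]
  convert hlim using 2 with u
  ring

theorem u_sq_asymptotic (n : ℕ) (hn : 1 ≤ n) (α : ℝ) (hα : α ∈ Set.Ioc (0:ℝ) 2)
    (C : ℝ) (T : ℝ → ℝ)
    (hT : ∀ u : ℝ, 1 ≤ u →
      log (T u) = n * u ^ 2 / 2 + ((n : ℝ) - 2 / α) * log u + C) :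
    Tendsto (fun u : ℝ =>
        u ^ 2 - ((2 / (n : ℝ)) * log (T u)
          + (2 / ((n : ℝ) * α) - 1) * log (log (T u))))
      atTop
      (nhds (log (((n : ℝ) / 2) ^ ((1:ℝ) - 2 / ((n : ℝ) * α)) * exp (-2 * C / n)))) :=
  u_sq_asymptotic_general n hn α C T hT
end
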